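/- A function f : (X,d) → (Y,ρ) between metric spaces is TB-regular if and only if for every Cauchy sequence (xₙ) in X, the sequence (f(xₙ)) has a Cauchy subsequence in Y. -/
import Mathlib

open Set Filter UniformSpace

/-- `f` is TB-regular if it maps totally bounded sets to totally bounded sets. -/
def TBRegular {X Y : Type*} [MetricSpace X] [MetricSpace Y] (f : X → Y) : Prop :=
  ∀ A : Set X, TotallyBounded A → TotallyBounded (f '' A)

/-- Every sequence in a totally bounded subset of a metric space has a Cauchy subsequence. -/
lemma exists_cauchy_subseq_of_totallyBounded {Y : Type*} [MetricSpace Y] {s : Set Y}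
    (hs : TotallyBounded s) (u : ℕ → Y) (hu : ∀ n, u n ∈ s) :
    ∃ φ : ℕ → ℕ, StrictMono φ ∧ CauchySeq (u ∘ φ) := by
  let c : Y → UniformSpace.Completion Y := (↑)
  have hc : IsUniformInducing c := UniformSpace.Completion.isUniformInducing_coe Y
  have htb : TotallyBounded (closure (c '' s)) :=
    (hs.image hc.uniformContinuous).closure
  have hcomp : IsCompact (closure (c '' s)) :=
    TotallyBounded.isCompact_of_isClosed htb isClosed_closure
  obtain ⟨a, _, φ, hφ, htend⟩ := hcomp.tendsto_subseq
    (x := fun n => c (u n)) (fun n => subset_closure ⟨u n, hu n, rfl⟩)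
  refine ⟨φ, hφ, ?_⟩
  have hcs : CauchySeq ((fun n => c (u n)) ∘ φ) := htend.cauchySeq
  have : Cauchy (Filter.map c (Filter.map (u ∘ φ) Filter.atTop)) := by
    have := hcs
    rwa [show ((fun n => c (u n)) ∘ φ) = c ∘ (u ∘ φ) from rfl, CauchySeq,
      ← Filter.map_map] at this
  exact hc.cauchy_map_iff.mp this

/-- If every sequence in `s` has a Cauchy subsequence, then `s` is totally bounded. -/
lemma totallyBounded_of_cauchy_subseq {Y : Type*} [MetricSpace Y] {s : Set Y}
    (h : ∀ u : ℕ → Y, (∀ n, u n ∈ s) →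
      ∃ φ : ℕ → ℕ, StrictMono φ ∧ CauchySeq (u ∘ φ)) :
    TotallyBounded s := by
  intro V V_in
  by_contra hV
  have key : ∀ t : Set Y, t.Finite → ∃ y, y ∈ s ∧ ∀ z ∈ t, (y, z) ∉ V := by
    intro t ht
    by_contra hno
    push_neg at hno
    exact hV ⟨t, ht, fun y hy => by
      obtain ⟨z, hz, hball⟩ := hno y hy
      exact mem_iUnion₂.2 ⟨z, hz, hball⟩⟩
  obtain ⟨u, hu'⟩ := seq_of_forall_finite_exists key
  have u_in : ∀ n, u n ∈ s := fun n => (hu' n).1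
  have hu : ∀ n m, m < n → (u n, u m) ∉ V := by
    intro n m hmn
    exact (hu' n).2 (u m) ⟨m, hmn, rfl⟩
  obtain ⟨φ, hφ, hcs⟩ := h u u_in
  obtain ⟨N, hN⟩ : ∃ N, ∀ p q, p ≥ N → q ≥ N → (u (φ p), u (φ q)) ∈ V :=
    hcs.mem_entourage V_in
  exact hu (φ (N + 1)) (φ N) (hφ (Nat.lt_succ_self N)) (hN (N + 1) N N.le_succ le_rfl)

theorem tbRegular_iff_cauchy_subseq {X Y : Type*} [MetricSpace X] [MetricSpace Y]
    (f : X → Y) :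
    TBRegular f ↔
      ∀ u : ℕ → X, CauchySeq u →
        ∃ φ : ℕ → ℕ, StrictMono φ ∧ CauchySeq (fun n => f (u (φ n))) := by
  constructor
  · intro hf u hu
    have htb : TotallyBounded (f '' Set.range u) := hf _ hu.totallyBounded_range
    obtain ⟨φ, hφ, hc⟩ := exists_cauchy_subseq_of_totallyBounded htb (fun n => f (u n))
      (fun n => ⟨u n, ⟨n, rfl⟩, rfl⟩)
    exact ⟨φ, hφ, hc⟩
  · intro h A hA
    apply totallyBounded_of_cauchy_subseq
    intro v hv
    choose x hxA hfx using fun n => hv n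
    obtain ⟨φ, hφ, hxc⟩ := exists_cauchy_subseq_of_totallyBounded hA x hxA
    obtain ⟨ψ, hψ, hfc⟩ := h (x ∘ φ) hxc
    refine ⟨φ ∘ ψ, hφ.comp hψ, ?_⟩
    have : (fun n => f (x (φ (ψ n)))) = v ∘ (φ ∘ ψ) := by
      funext n; exact hfx (φ (ψ n))
    rwa [← this]
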